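/- Let n ≥ 2 and let R̂ be uniformly distributed on the unit sphere S^{n−1} ⊂ ℝⁿ. For any fixed unit vector r̂ and any γ ∈ (0,1) with nγ² > 1 − γ², the probability that ⟨r̂, R̂⟩ ≥ γ is at least (1 − (1−γ²)/(nγ²)) · (1/sqrt(2πn)) · (1−γ²)^{(n−1)/2} / γ. -/

import Mathlib

open MeasureTheory
open scoped RealInnerProductSpace

/-!
The cap `{z ∈ S^(n-1) | γ ≤ ⟪r, z⟫}` has `toSphere`-measure `n` times the volume of the cone
over it inside the unit ball. Rotating `r` to the first basis vector, that cone contains, above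
each height `t ∈ (0, 1)`, an `(n-1)`-ball of radius `min (t √(1-γ²)/γ) √(1-t²)`, so by Fubini its
volume is at least `V_{n-1} ∫₀¹ (radius)^(n-1)`. The part `t ≤ γ` integrates exactly, the part
`t ≥ γ` is bounded below by Shannon's estimate
`∫_γ^1 (1-t²)^((n-1)/2) ≥ γ (1-γ²)^((n+1)/2) / (nγ²+1)`, because the derivative of
`-t (1-t²)^((n+1)/2) / (nt²+1)` stays below the integrand; finally log-convexity of `Γ` gives `n V_n ≤ √(2πn) V_{n-1}` for the normalisation.
-/

open Real Set Metric
open scoped Pointwise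

theorem Real.Gamma_add_half_sq_le {x : ℝ} (hx : 0 < x) :
    Gamma (x + 1 / 2) ^ 2 ≤ Gamma x * Gamma (x + 1) := by
  have hconv := convexOn_log_Gamma.2 (mem_Ioi.2 hx) (mem_Ioi.2 (by linarith : 0 < x + 1))
    (by norm_num : (0 : ℝ) ≤ 1 / 2) (by norm_num : (0 : ℝ) ≤ 1 / 2) (by norm_num)
  simp only [Function.comp_apply, smul_eq_mul] at hconv
  rw [show 1 / 2 * x + 1 / 2 * (x + 1) = x + 1 / 2 by ring] at hconv
  have hx' := Gamma_pos_of_pos hx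
  have hx1 := Gamma_pos_of_pos (by linarith : 0 < x + 1)
  rw [← log_le_log_iff (by positivity) (by positivity), log_pow, log_mul hx'.ne' hx1.ne']
  push_cast
  linarith

noncomputable def ballVolume (k : ℕ) : ℝ := √π ^ k / Gamma (k / 2 + 1)

theorem ballVolume_pos (k : ℕ) : 0 < ballVolume k :=
  div_pos (by positivity) (Gamma_pos_of_pos (by positivity))

theorem succ_mul_ballVolume_succ_le (m : ℕ) :
    (m + 1) * ballVolume (m + 1) ≤ √(2 * π * (m + 1)) * ballVolume m := by
  set x : ℝ := (m + 1) / 2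
  have hx : 0 < x := by positivity
  have hrec : Gamma (x + 1) = x * Gamma x := Gamma_add_one hx.ne'
  have hsq := Gamma_add_half_sq_le hx
  have hGx := Gamma_pos_of_pos (by linarith : 0 < x + 1 / 2)
  have hGx1 := Gamma_pos_of_pos (by linarith : 0 < x + 1)
  have hcore : (m + 1) * √π * Gamma (x + 1 / 2) ≤ √(2 * π * (m + 1)) * Gamma (x + 1) := by
    rw [← pow_le_pow_iff_left₀ (by positivity) (by positivity) two_ne_zero, mul_pow, mul_pow,
      mul_pow, sq_sqrt pi_pos.le, sq_sqrt (by positivity), show (m : ℝ) + 1 = 2 * x by ring]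
    calc (2 * x) ^ 2 * π * Gamma (x + 1 / 2) ^ 2
        ≤ (2 * x) ^ 2 * π * (Gamma x * Gamma (x + 1)) := by gcongr
      _ = 2 * π * (2 * x) * Gamma (x + 1) ^ 2 := by rw [hrec]; ring
  have hm : (m : ℝ) / 2 + 1 = x + 1 / 2 := by ring
  have hm1 : ((m + 1 : ℕ) : ℝ) / 2 + 1 = x + 1 := by push_cast; ring
  rw [ballVolume, ballVolume, hm, hm1, pow_succ, mul_div_assoc', mul_div_assoc',
    div_le_div_iff₀ hGx1 hGx]
  calc (m + 1) * (√π ^ m * √π) * Gamma (x + 1 / 2)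
      = √π ^ m * ((m + 1) * √π * Gamma (x + 1 / 2)) := by ring
    _ ≤ √π ^ m * (√(2 * π * (m + 1)) * Gamma (x + 1)) := by gcongr
    _ = √(2 * π * (m + 1)) * √π ^ m * Gamma (x + 1) := by ring

theorem le_integral_one_sub_sq_rpow {q γ : ℝ} (hq : 0 ≤ q) (hγ : -1 ≤ γ) (hγ1 : γ ≤ 1) :
    γ * (1 - γ ^ 2) ^ (q + 1) / ((2 * q + 1) * γ ^ 2 + 1) ≤ ∫ t in γ..1, (1 - t ^ 2) ^ q := by
  set h : ℝ → ℝ := fun t ↦ t * (1 - t ^ 2) ^ (q + 1) / ((2 * q + 1) * t ^ 2 + 1)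
  set h' : ℝ → ℝ := fun t ↦ (((1 - t ^ 2) ^ (q + 1) + t * ((q + 1) * (1 - t ^ 2) ^ q * (-2 * t))) *
      ((2 * q + 1) * t ^ 2 + 1) - t * (1 - t ^ 2) ^ (q + 1) * ((2 * q + 1) * (2 * t))) /
      ((2 * q + 1) * t ^ 2 + 1) ^ 2
  have hden : ∀ t : ℝ, 0 < (2 * q + 1) * t ^ 2 + 1 := fun t ↦ by positivity
  have hcont : Continuous fun t : ℝ ↦ (1 - t ^ 2) ^ q :=
    (continuous_const.sub (continuous_pow 2)).rpow_const fun _ ↦ Or.inr hq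
  have hderiv : ∀ t, HasDerivAt h (h' t) t := by
    intro t
    have hbase : HasDerivAt (fun t : ℝ ↦ 1 - t ^ 2) (-2 * t) t := by
      simpa using (hasDerivAt_pow 2 t).const_sub 1
    have hpow := hbase.rpow_const (p := q + 1) (Or.inr (by linarith))
    rw [add_sub_cancel_right] at hpow
    exact ((hasDerivAt_id t).mul hpow).div
      (((hasDerivAt_pow 2 t).const_mul (2 * q + 1)).add_const 1) (hden t).ne' |>.congr_deriv
      (by simp [h']; ring)
  have hslope : ∀ t ∈ Ioo γ 1, -h' t ≤ (1 - t ^ 2) ^ q := by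
    rintro t ⟨hγt, ht1⟩
    have hu : 0 ≤ 1 - t ^ 2 := by nlinarith
    have hgap : (1 - t ^ 2) ^ q - -h' t = 2 * (1 - t ^ 2) ^ q * (1 - t ^ 2) /
        ((2 * q + 1) * t ^ 2 + 1) ^ 2 := by
      simp only [h']
      rw [rpow_add_one' hu (by linarith)]
      field_simp
      ring
    have : 0 ≤ (1 - t ^ 2) ^ q - -h' t := by rw [hgap]; have := rpow_nonneg hu q; positivity
    linarith
  have key := intervalIntegral.sub_le_integral_of_hasDeriv_right_of_le hγ1
    (fun t _ ↦ (hderiv t).neg.continuousAt.continuousWithinAt)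
    (fun t _ ↦ (hderiv t).neg.hasDerivWithinAt) hcont.integrableOn_Icc hslope
  simpa [h, zero_rpow (show q + 1 ≠ 0 by linarith)] using key

theorem one_sub_div_div_le {N γ : ℝ} (hN : 0 < N) (hγ0 : 0 < γ) (hγ1 : γ ≤ 1) :
    (1 - (1 - γ ^ 2) / (N * γ ^ 2)) / γ ≤ γ * (N + 1) / (N * γ ^ 2 + 1) := by
  rw [div_le_div_iff₀ hγ0 (by positivity), one_sub_div (by positivity), div_mul_eq_mul_div,
    div_le_iff₀ (by positivity)]
  nlinarith

theorem mem_Ioo_smul_image_cap {E : Type*} [NormedAddCommGroup E] [InnerProductSpace ℝ E]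
    {r x : E} {γ : ℝ} (hx0 : x ≠ 0) (hx1 : ‖x‖ < 1) (hγ : γ * ‖x‖ ≤ ⟪r, x⟫) :
    x ∈ Ioo (0 : ℝ) 1 • ((↑) '' {z : sphere (0 : E) 1 | γ ≤ ⟪r, (z : E)⟫}) := by
  have hnorm : 0 < ‖x‖ := norm_pos_iff.2 hx0
  have hz : ‖x‖⁻¹ • x ∈ sphere (0 : E) 1 := by
    rw [mem_sphere_zero_iff_norm, norm_smul, norm_inv, norm_norm, inv_mul_cancel₀ hnorm.ne']
  have hcap : γ ≤ ⟪r, ‖x‖⁻¹ • x⟫ := by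
    rwa [real_inner_smul_right, le_inv_mul_iff₀ hnorm, mul_comm]
  simpa [smul_inv_smul₀ hnorm.ne'] using
    smul_mem_smul (mem_Ioo.2 ⟨hnorm, hx1⟩) (mem_image_of_mem Subtype.val
      (show (⟨_, hz⟩ : sphere (0 : E) 1) ∈ {z : sphere (0 : E) 1 | γ ≤ ⟪r, (z : E)⟫} from hcap))

theorem EuclideanSpace.exists_measurePreserving_inner_fst {m : ℕ}
    {r : EuclideanSpace ℝ (Fin (m + 1))} (hr : ‖r‖ = 1) :
    ∃ Φ : EuclideanSpace ℝ (Fin (m + 1)) → ℝ × EuclideanSpace ℝ (Fin m), MeasurePreserving Φ ∧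
      ∀ x, (Φ x).1 = ⟪r, x⟫ ∧ ‖x‖ ^ 2 = (Φ x).1 ^ 2 + ‖(Φ x).2‖ ^ 2 := by
  set e₀ : EuclideanSpace ℝ (Fin (m + 1)) := EuclideanSpace.single 0 1
  set e := Submodule.reflection (ℝ ∙ (r - e₀))ᗮ
  have her : e r = e₀ := Submodule.reflection_sub (by simp [e₀, hr])
  refine ⟨Prod.map id (WithLp.toLp 2) ∘ MeasurableEquiv.piFinSuccAbove (fun _ ↦ ℝ) 0 ∘
    WithLp.ofLp ∘ e, ?_, fun x ↦ ⟨?_, ?_⟩⟩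
  · exact ((MeasurePreserving.id volume).prod (PiLp.volume_preserving_toLp (Fin m))).comp
      ((volume_preserving_piFinSuccAbove (fun _ ↦ ℝ) 0).comp
        ((EuclideanSpace.volume_preserving_symm_measurableEquiv_toLp (Fin (m + 1))).comp
          e.measurePreserving))
  · have : ⟪r, x⟫ = ⟪e₀, e x⟫ := by rw [← her, LinearIsometryEquiv.inner_map_map]
    simp [this, e₀, MeasurableEquiv.piFinSuccAbove_apply, EuclideanSpace.inner_single_left]
  · rw [← e.norm_map x, EuclideanSpace.norm_sq_eq, EuclideanSpace.norm_sq_eq, Fin.sum_univ_succ]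
    simp [MeasurableEquiv.piFinSuccAbove_apply, Fin.tail]

theorem MeasureTheory.Measure.prod_setOf_norm_lt {α F : Type*} [MeasurableSpace α]
    [NormedAddCommGroup F] [MeasurableSpace F] [OpensMeasurableSpace F]
    (μ : Measure α) (ν : Measure F) [SFinite ν] {ρ : α → ℝ} (hρ : Measurable ρ) :
    μ.prod ν {p | ‖p.2‖ < ρ p.1} = ∫⁻ t, ν (ball 0 (ρ t)) ∂μ := by
  rw [Measure.prod_apply (measurableSet_lt measurable_snd.norm (hρ.comp measurable_fst) :
    MeasurableSet {p : α × F | ‖p.2‖ < ρ p.1})]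
  congr! with t
  ext w
  simp

/-- The slice at height `t` of the cone `{x | γ ‖x‖ ≤ ⟪r, x⟫}` cut by the unit ball is, up to its
boundary, the ball of this radius in `r`ᗮ. -/
noncomputable def capSliceRadius (γ t : ℝ) : ℝ := min (t * (√(1 - γ ^ 2) / γ)) √(1 - t ^ 2)

section capSliceRadius

variable {γ : ℝ}

theorem capSliceRadius_of_le {t : ℝ} (hγ0 : 0 < γ) (hγ1 : γ ≤ 1) (ht0 : 0 ≤ t) (htγ : t ≤ γ) :
    capSliceRadius γ t = t * (√(1 - γ ^ 2) / γ) := by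
  refine min_eq_left ?_
  rw [← sqrt_sq (by positivity : 0 ≤ t * (√(1 - γ ^ 2) / γ))]
  refine sqrt_le_sqrt ?_
  rw [mul_pow, div_pow, sq_sqrt (by nlinarith), mul_div_assoc', div_le_iff₀ (by positivity)]
  nlinarith [mul_le_mul htγ htγ ht0 hγ0.le]

theorem capSliceRadius_of_ge {t : ℝ} (hγ0 : 0 < γ) (hγt : γ ≤ t) (ht1 : t ≤ 1) :
    capSliceRadius γ t = √(1 - t ^ 2) := by
  refine min_eq_right ?_
  rw [← sqrt_sq (mul_nonneg (hγ0.le.trans hγt) (by positivity) : 0 ≤ t * (√(1 - γ ^ 2) / γ))]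
  refine sqrt_le_sqrt ?_
  rw [mul_pow, div_pow, sq_sqrt (by nlinarith), mul_div_assoc', le_div_iff₀ (by positivity)]
  nlinarith [mul_le_mul hγt hγt hγ0.le (hγ0.le.trans hγt)]

variable (γ) in
theorem continuous_capSliceRadius : Continuous (capSliceRadius γ) :=
  (continuous_id.mul continuous_const).min (continuous_const.sub (continuous_pow 2)).sqrt

theorem capSliceRadius_nonneg {t : ℝ} (hγ0 : 0 < γ) (ht : 0 ≤ t) : 0 ≤ capSliceRadius γ t :=
  le_min (mul_nonneg ht (by positivity)) (sqrt_nonneg _)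

theorem pos_of_lt_capSliceRadius {t s : ℝ} (hγ0 : 0 < γ) (hs : 0 ≤ s)
    (h : s < capSliceRadius γ t) : 0 < t := by
  by_contra! ht
  have : t * (√(1 - γ ^ 2) / γ) ≤ 0 := mul_nonpos_of_nonpos_of_nonneg ht (by positivity)
  have h' : s < t * (√(1 - γ ^ 2) / γ) := h.trans_le (min_le_left _ _)
  linarith

theorem sq_add_sq_lt_of_lt_capSliceRadius {t s : ℝ} (hγ0 : 0 < γ) (hγ1 : γ ≤ 1)
    (hs : 0 ≤ s) (h : s < capSliceRadius γ t) :
    t ^ 2 + s ^ 2 < 1 ∧ γ ^ 2 * (t ^ 2 + s ^ 2) < t ^ 2 := by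
  have hu : 0 ≤ 1 - γ ^ 2 := by nlinarith
  have h1 : s ^ 2 < 1 - t ^ 2 := (lt_sqrt hs).1 (h.trans_le (min_le_right _ _))
  have h2 : s ^ 2 < (t * (√(1 - γ ^ 2) / γ)) ^ 2 :=
    pow_lt_pow_left₀ (h.trans_le (min_le_left _ _)) hs two_ne_zero
  rw [mul_pow, div_pow, sq_sqrt hu, mul_div_assoc', lt_div_iff₀ (by positivity)] at h2
  constructor <;> nlinarith

theorem integral_capSliceRadius_pow_ge (m : ℕ) (hγ0 : 0 < γ) (hγ1 : γ < 1) :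
    γ * (1 - γ ^ 2) ^ ((m : ℝ) / 2) / (m + 1) +
        γ * (1 - γ ^ 2) ^ ((m : ℝ) / 2 + 1) / ((m + 1) * γ ^ 2 + 1) ≤
      ∫ t in (0 : ℝ)..1, capSliceRadius γ t ^ m := by
  have hu : 0 ≤ 1 - γ ^ 2 := by nlinarith
  have hsqrt_pow : ∀ x : ℝ, 0 ≤ x → √x ^ m = x ^ ((m : ℝ) / 2) := fun x hx ↦ by
    rw [sqrt_eq_rpow, ← rpow_natCast, ← rpow_mul hx]; ring_nf
  have hint (a b : ℝ) : IntervalIntegrable (fun t ↦ capSliceRadius γ t ^ m) volume a b :=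
    ((continuous_capSliceRadius γ).pow m).intervalIntegrable a b
  rw [← intervalIntegral.integral_add_adjacent_intervals (hint 0 γ) (hint γ 1)]
  refine add_le_add (le_of_eq ?_) ?_
  · have hcongr : EqOn (fun t ↦ capSliceRadius γ t ^ m) (fun t ↦ (√(1 - γ ^ 2) / γ) ^ m * t ^ m)
        (uIcc 0 γ) := by
      intro t ht
      rw [uIcc_of_le hγ0.le] at ht
      simp only [capSliceRadius_of_le hγ0 hγ1.le ht.1 ht.2, mul_pow, mul_comm]
    rw [intervalIntegral.integral_congr hcongr, intervalIntegral.integral_const_mul,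
      integral_pow, div_pow, hsqrt_pow _ hu]
    field_simp
    ring
  · have hcongr : EqOn (fun t ↦ capSliceRadius γ t ^ m) (fun t ↦ (1 - t ^ 2) ^ ((m : ℝ) / 2))
        (uIcc γ 1) := by
      intro t ht
      rw [uIcc_of_le hγ1.le] at ht
      simp only [capSliceRadius_of_ge hγ0 ht.1 ht.2]
      exact hsqrt_pow _ (by nlinarith [ht.1, ht.2])
    rw [intervalIntegral.integral_congr hcongr]
    have := le_integral_one_sub_sq_rpow (q := (m : ℝ) / 2) (by positivity) (by linarith) hγ1.le
    rwa [show 2 * ((m : ℝ) / 2) + 1 = m + 1 by ring] at this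

theorem ofReal_integral_capSliceRadius_le_volume {m : ℕ} [Nonempty (Fin m)] (hγ0 : 0 < γ) :
    ENNReal.ofReal (ballVolume m * ∫ t in (0 : ℝ)..1, capSliceRadius γ t ^ m) ≤
      volume {p : ℝ × EuclideanSpace ℝ (Fin m) | ‖p.2‖ < capSliceRadius γ p.1} := by
  rw [Measure.volume_eq_prod, Measure.prod_setOf_norm_lt _ _
    (continuous_capSliceRadius γ).measurable]
  have hint : IntegrableOn (fun t ↦ capSliceRadius γ t ^ m * ballVolume m) (Ioc 0 1) :=
    (((continuous_capSliceRadius γ).pow m).mul continuous_const).integrableOn_Icc.mono_set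
      Ioc_subset_Icc_self
  calc ENNReal.ofReal (ballVolume m * ∫ t in (0 : ℝ)..1, capSliceRadius γ t ^ m)
      = ∫⁻ t in Ioc 0 1, ENNReal.ofReal (capSliceRadius γ t ^ m * ballVolume m) := by
        rw [intervalIntegral.integral_of_le zero_le_one, mul_comm, ← integral_mul_const,
          ofReal_integral_eq_lintegral_ofReal hint (ae_restrict_of_forall_mem measurableSet_Ioc
            fun t ht ↦ mul_nonneg (pow_nonneg (capSliceRadius_nonneg hγ0 ht.1.le) m)
              (ballVolume_pos m).le)]
    _ = ∫⁻ t in Ioc 0 1, volume (ball (0 : EuclideanSpace ℝ (Fin m)) (capSliceRadius γ t)) := by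
        refine setLIntegral_congr_fun measurableSet_Ioc fun t ht ↦ ?_
        rw [EuclideanSpace.volume_ball, Fintype.card_fin, ENNReal.ofReal_mul
          (pow_nonneg (capSliceRadius_nonneg hγ0 ht.1.le) m), ENNReal.ofReal_pow
          (capSliceRadius_nonneg hγ0 ht.1.le)]
        rfl
    _ ≤ _ := setLIntegral_le_lintegral _ _

theorem ofReal_integral_capSliceRadius_le_toSphere {m : ℕ} [Nonempty (Fin m)]
    {r : EuclideanSpace ℝ (Fin (m + 1))} (hr : ‖r‖ = 1) (hγ0 : 0 < γ) (hγ1 : γ ≤ 1) :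
    ENNReal.ofReal ((m + 1) * (ballVolume m * ∫ t in (0 : ℝ)..1, capSliceRadius γ t ^ m)) ≤
      (volume : Measure (EuclideanSpace ℝ (Fin (m + 1)))).toSphere
        {z | γ ≤ ⟪r, (z : EuclideanSpace ℝ (Fin (m + 1)))⟫} := by
  obtain ⟨Φ, hΦ, hΦx⟩ := EuclideanSpace.exists_measurePreserving_inner_fst hr
  set S : Set (ℝ × EuclideanSpace ℝ (Fin m)) := {p | ‖p.2‖ < capSliceRadius γ p.1}
  have hsub : Φ ⁻¹' S ⊆ Ioo (0 : ℝ) 1 •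
      ((↑) '' {z : sphere (0 : EuclideanSpace ℝ (Fin (m + 1))) 1 | γ ≤ ⟪r, (z : _)⟫}) := by
    intro x (hx : ‖(Φ x).2‖ < _)
    obtain ⟨hfst, hnorm⟩ := hΦx x
    have ht := pos_of_lt_capSliceRadius hγ0 (norm_nonneg _) hx
    obtain ⟨h1, h2⟩ := sq_add_sq_lt_of_lt_capSliceRadius hγ0 hγ1 (norm_nonneg _) hx
    rw [← hnorm] at h1 h2
    rw [hfst] at ht h2
    refine mem_Ioo_smul_image_cap ?_ ?_ ?_
    · rintro rfl
      simp at ht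
    · exact (sq_lt_one_iff₀ (norm_nonneg _)).1 h1
    · exact (lt_of_pow_lt_pow_left₀ 2 ht.le (by rwa [mul_pow])).le
  have hcap : MeasurableSet {z : sphere (0 : EuclideanSpace ℝ (Fin (m + 1))) 1 |
      γ ≤ ⟪r, (z : EuclideanSpace ℝ (Fin (m + 1)))⟫} :=
    measurableSet_le measurable_const
      ((continuous_const.inner continuous_id).comp continuous_subtype_val).measurable
  rw [Measure.toSphere_apply' _ hcap, finrank_euclideanSpace_fin,
    ENNReal.ofReal_mul (by positivity), ← Nat.cast_add_one, ENNReal.ofReal_natCast]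
  gcongr
  calc _ ≤ volume S := ofReal_integral_capSliceRadius_le_volume hγ0
    _ = volume (Φ ⁻¹' S) := (hΦ.measure_preimage (measurableSet_lt measurable_snd.norm
      ((continuous_capSliceRadius γ).measurable.comp measurable_fst)).nullMeasurableSet).symm
    _ ≤ _ := measure_mono hsub

theorem succ_mul_ballVolume_mul_le_integral_capSliceRadius (m : ℕ) (hγ0 : 0 < γ) (hγ1 : γ < 1) :
    (m + 1) * ballVolume (m + 1) * ((1 - (1 - γ ^ 2) / ((m + 1) * γ ^ 2)) *
        (1 / √(2 * π * (m + 1))) * (1 - γ ^ 2) ^ ((m : ℝ) / 2) / γ) ≤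
      (m + 1) * (ballVolume m * ∫ t in (0 : ℝ)..1, capSliceRadius γ t ^ m) := by
  set A := (1 - γ ^ 2) ^ ((m : ℝ) / 2)
  set E := 1 - (1 - γ ^ 2) / ((m + 1) * γ ^ 2)
  have hu : 0 ≤ 1 - γ ^ 2 := by nlinarith
  have hA : 0 ≤ A := rpow_nonneg hu _
  have hV := ballVolume_pos m
  have hsqrt : 0 < √(2 * π * (m + 1)) := by positivity
  rcases le_total E 0 with hE | hE
  · have hRHS : 0 ≤ (m + 1) * (ballVolume m * ∫ t in (0 : ℝ)..1, capSliceRadius γ t ^ m) :=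
      mul_nonneg (by positivity) (mul_nonneg hV.le (intervalIntegral.integral_nonneg zero_le_one
        fun t ht ↦ pow_nonneg (capSliceRadius_nonneg hγ0 ht.1) m))
    have hR : E * (1 / √(2 * π * (m + 1))) * A / γ ≤ 0 :=
      div_nonpos_of_nonpos_of_nonneg (mul_nonpos_of_nonpos_of_nonneg
        (mul_nonpos_of_nonpos_of_nonneg hE (by positivity)) hA) hγ0.le
    exact (mul_nonpos_of_nonneg_of_nonpos
      (mul_nonneg (by positivity) (ballVolume_pos _).le) hR).trans hRHS
  have hJ := integral_capSliceRadius_pow_ge m hγ0 hγ1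
  rw [rpow_add_one' hu (by positivity)] at hJ
  have hR : 0 ≤ E * (1 / √(2 * π * (m + 1))) * A / γ :=
    div_nonneg (mul_nonneg (mul_nonneg hE (by positivity)) hA) hγ0.le
  calc (m + 1) * ballVolume (m + 1) * (E * (1 / √(2 * π * (m + 1))) * A / γ)
      ≤ √(2 * π * (m + 1)) * ballVolume m * (E * (1 / √(2 * π * (m + 1))) * A / γ) :=
        mul_le_mul_of_nonneg_right (succ_mul_ballVolume_succ_le m) hR
    _ = ballVolume m * A * (E / γ) := by field_simp
    _ ≤ ballVolume m * A * (γ * ((m + 1) + 1) / ((m + 1) * γ ^ 2 + 1)) :=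
        mul_le_mul_of_nonneg_left (one_sub_div_div_le (by positivity) hγ0 hγ1.le) (by positivity)
    _ = (m + 1) * (ballVolume m * (γ * A / (m + 1) + γ * (A * (1 - γ ^ 2)) /
          ((m + 1) * γ ^ 2 + 1))) := by
        field_simp
        ring
    _ ≤ (m + 1) * (ballVolume m * ∫ t in (0 : ℝ)..1, capSliceRadius γ t ^ m) := by gcongr

end capSliceRadius

theorem stmt8_general (n : ℕ) (hn : 2 ≤ n)
    (r : EuclideanSpace ℝ (Fin n)) (hr : ‖r‖ = 1) (γ : ℝ)
    (hγ0 : 0 < γ) (hγ1 : γ < 1) :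
    ENNReal.ofReal ((1 - (1 - γ ^ 2) / (n * γ ^ 2)) * (1 / Real.sqrt (2 * Real.pi * n)) *
        (1 - γ ^ 2) ^ (((n : ℝ) - 1) / 2) / γ) ≤
      (((volume : Measure (EuclideanSpace ℝ (Fin n))).toSphere Set.univ)⁻¹ •
          (volume : Measure (EuclideanSpace ℝ (Fin n))).toSphere)
        {z : Metric.sphere (0 : EuclideanSpace ℝ (Fin n)) 1 |
          γ ≤ ⟪r, (z : EuclideanSpace ℝ (Fin n))⟫} := by
  obtain ⟨m, rfl⟩ : ∃ m, n = m + 1 := ⟨n - 1, by omega⟩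
  have : Nonempty (Fin m) := ⟨⟨0, by omega⟩⟩
  have hsphere : (volume : Measure (EuclideanSpace ℝ (Fin (m + 1)))).toSphere univ =
      ENNReal.ofReal ((m + 1) * ballVolume (m + 1)) := by
    rw [Measure.toSphere_apply_univ, finrank_euclideanSpace_fin, EuclideanSpace.volume_ball,
      ENNReal.ofReal_mul (by positivity), ← Nat.cast_add_one, ENNReal.ofReal_natCast]
    simp [ballVolume]
  have hpos := mul_pos (by positivity : (0 : ℝ) < m + 1) (ballVolume_pos (m + 1))
  rw [Measure.smul_apply, smul_eq_mul, ← ENNReal.mul_le_iff_le_inv (by simpa [hsphere] using hpos)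
    (by simp [hsphere]), hsphere, ← ENNReal.ofReal_mul hpos.le]
  refine (ENNReal.ofReal_le_ofReal ?_).trans
    (ofReal_integral_capSliceRadius_le_toSphere hr hγ0 hγ1.le)
  push_cast
  rw [show ((m : ℝ) + 1 - 1) / 2 = m / 2 by ring]
  exact succ_mul_ballVolume_mul_le_integral_capSliceRadius m hγ0 hγ1

theorem stmt8 (n : ℕ) (hn : 2 ≤ n)
    (r : EuclideanSpace ℝ (Fin n)) (hr : ‖r‖ = 1) (γ : ℝ)
    (hγ0 : 0 < γ) (hγ1 : γ < 1) (hγn : 1 - γ ^ 2 < n * γ ^ 2) :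
    ENNReal.ofReal ((1 - (1 - γ ^ 2) / (n * γ ^ 2)) * (1 / Real.sqrt (2 * Real.pi * n)) *
        (1 - γ ^ 2) ^ (((n : ℝ) - 1) / 2) / γ) ≤
      (((volume : Measure (EuclideanSpace ℝ (Fin n))).toSphere Set.univ)⁻¹ •
          (volume : Measure (EuclideanSpace ℝ (Fin n))).toSphere)
        {z : Metric.sphere (0 : EuclideanSpace ℝ (Fin n)) 1 |
          γ ≤ ⟪r, (z : EuclideanSpace ℝ (Fin n))⟫} :=
  stmt8_general n hn r hr γ hγ0 hγ1
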